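/- arXiv:1902.02094 — 2 statements merged into one kernel-verified Lean document; each statement's English description precedes it below -/
import Mathlib

section
/- There exist a decreasing function Ψ : ℕ → (0,∞) tending to 0 and an increasing continuous function g : [0,∞) → [0,∞) with g(0)=0 such that the series ∑_{k≥1} 2^{3k} g(Ψ(2^k)/2^k) converges while the series ∑_{k≥1} 2^k g(√(Ψ(2^k))/2^{k/2}) diverges. -/
/-!
Take `g = ∑ⱼ cⱼ rⱼ`, where `rⱼ` is a continuous ramp rising from `0` at `vⱼ = 2^(-3·4^j)` to `1` at
`2vⱼ`, and `cⱼ = 2^(-4^(j+1))`. Since `cⱼ₊₁ ≤ cⱼ/2`, `g(x) ≤ 2c_L` once `x ≤ v₀, …, v_{L-1}`.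
Let `Ψ(2^m) = 2^(-2·4^L)` for `4^L ≤ m < 4^(L+1)`. The arguments of the first series,
`xₘ = Ψ(2^m)/2^m`, lie below every `vⱼ` with `4^j < m`, so `g(xₘ) ≤ 2·2^(-4m)` and the first
series is dominated by `∑ 2^(1-m)`. The arguments of the second series are `√xₘ`, and at
`m = 4^(N+1) - 2` one has `√xₘ = 2v_N`, so the `m`-th term is at least `2^m c_N = 1/4`: the terms
do not tend to zero.
-/

open Filter

section Ramp

noncomputable def ramp (v x : ℝ) : ℝ := min 1 (max 0 (x / v - 1))

lemma ramp_nonneg (v x : ℝ) : 0 ≤ ramp v x := le_min zero_le_one (le_max_left _ _)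

lemma ramp_le_one (v x : ℝ) : ramp v x ≤ 1 := min_le_left _ _

lemma ramp_zero (v : ℝ) : ramp v 0 = 0 := by norm_num [ramp]

lemma monotone_ramp {v : ℝ} (hv : 0 ≤ v) : Monotone (ramp v) :=
  monotone_const.min (monotone_const.max ((monotone_id.div_const hv).add_const (-1)))

lemma continuous_ramp (v : ℝ) : Continuous (ramp v) := by
  unfold ramp; fun_prop

lemma ramp_eq_zero_of_le {v x : ℝ} (hv : 0 < v) (h : x ≤ v) : ramp v x = 0 := by
  have : x / v - 1 ≤ 0 := by rw [sub_nonpos, div_le_one hv]; exact h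
  simp [ramp, max_eq_left this]

lemma ramp_eq_one_of_le {v x : ℝ} (hv : 0 < v) (h : 2 * v ≤ x) : ramp v x = 1 := by
  have : 1 ≤ x / v - 1 := by rw [le_sub_iff_add_le, le_div_iff₀ hv]; linarith
  simp [ramp, min_eq_left (this.trans (le_max_right _ _))]

end Ramp

section RampSum

variable {c v : ℕ → ℝ}

noncomputable def rampSum (c v : ℕ → ℝ) (x : ℝ) : ℝ := ∑' j, c j * ramp (v j) x

lemma rampSum_zero : rampSum c v 0 = 0 := by simp [rampSum, ramp_zero]

variable (hc0 : ∀ j, 0 ≤ c j) (hc : Summable c)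
include hc0

lemma mul_ramp_nonneg (j : ℕ) (x : ℝ) : 0 ≤ c j * ramp (v j) x :=
  mul_nonneg (hc0 j) (ramp_nonneg _ _)

lemma mul_ramp_le (j : ℕ) (x : ℝ) : c j * ramp (v j) x ≤ c j :=
  mul_le_of_le_one_right (hc0 j) (ramp_le_one _ _)

lemma rampSum_nonneg (x : ℝ) : 0 ≤ rampSum c v x :=
  tsum_nonneg (mul_ramp_nonneg hc0 · x)

include hc

lemma summable_mul_ramp (x : ℝ) : Summable fun j => c j * ramp (v j) x :=
  hc.of_nonneg_of_le (mul_ramp_nonneg hc0 · x) (mul_ramp_le hc0 · x)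

lemma monotone_rampSum (hv : ∀ j, 0 ≤ v j) : Monotone (rampSum c v) := fun _ _ hxy =>
  (summable_mul_ramp hc0 hc _).tsum_le_tsum
    (fun j => mul_le_mul_of_nonneg_left (monotone_ramp (hv j) hxy) (hc0 j))
    (summable_mul_ramp hc0 hc _)

lemma continuous_rampSum : Continuous (rampSum c v) :=
  continuous_tsum (fun j => continuous_const.mul (continuous_ramp _)) hc fun j x => by
    rw [Real.norm_of_nonneg (mul_ramp_nonneg hc0 j x)]; exact mul_ramp_le hc0 j x

lemma le_rampSum {j : ℕ} {x : ℝ} (hv : 0 < v j) (h : 2 * v j ≤ x) : c j ≤ rampSum c v x := by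
  have := (summable_mul_ramp (v := v) hc0 hc x).le_tsum j fun i _ => mul_ramp_nonneg hc0 i x
  rwa [ramp_eq_one_of_le hv h, mul_one] at this

lemma rampSum_le_tsum_nat_add {x : ℝ} (L : ℕ) (hv : ∀ j < L, 0 < v j)
    (h : ∀ j < L, x ≤ v j) :
    rampSum c v x ≤ ∑' i, c (i + L) := by
  have hsum := summable_mul_ramp (v := v) hc0 hc x
  have hhead : ∑ j ∈ Finset.range L, c j * ramp (v j) x = 0 :=
    Finset.sum_eq_zero fun j hj => by
      have hjL := Finset.mem_range.mp hj
      rw [ramp_eq_zero_of_le (hv j hjL) (h j hjL), mul_zero]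
  rw [rampSum, ← hsum.sum_add_tsum_nat_add L, hhead, zero_add]
  exact ((summable_nat_add_iff L).mpr hsum).tsum_le_tsum (fun i => mul_ramp_le hc0 _ x)
    ((summable_nat_add_iff L).mpr hc)

end RampSum

section Halving

variable {c : ℕ → ℝ} (hc : ∀ j, c (j + 1) ≤ c j / 2)
include hc

lemma le_mul_half_pow_of_halving (L : ℕ) : ∀ i, c (i + L) ≤ c L * (1 / 2) ^ i
  | 0 => by simp
  | i + 1 => calc
      c (i + 1 + L) = c (i + L + 1) := by rw [Nat.add_right_comm]
      _ ≤ c (i + L) / 2 := hc _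
      _ ≤ c L * (1 / 2) ^ i / 2 := by gcongr; exact le_mul_half_pow_of_halving L i
      _ = c L * (1 / 2) ^ (i + 1) := by ring

lemma summable_of_halving (hc0 : ∀ j, 0 ≤ c j) : Summable c :=
  summable_geometric_two.mul_left (c 0) |>.of_nonneg_of_le hc0 fun i => by
    simpa using le_mul_half_pow_of_halving hc 0 i

lemma tsum_nat_add_le_of_halving (hc0 : ∀ j, 0 ≤ c j) (L : ℕ) :
    ∑' i, c (i + L) ≤ 2 * c L := calc
  ∑' i, c (i + L) ≤ ∑' i, c L * (1 / 2) ^ i :=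
    ((summable_nat_add_iff L).mpr (summable_of_halving hc hc0)).tsum_le_tsum
      (le_mul_half_pow_of_halving hc L) (summable_geometric_two.mul_left _)
  _ = 2 * c L := by rw [tsum_mul_left, tsum_geometric_two, mul_comm]

end Halving

lemma one_half_pow_le_one_half_pow {m n : ℕ} (h : m ≤ n) : (1 / 2 : ℝ) ^ n ≤ (1 / 2) ^ m :=
  pow_le_pow_of_le_one (by norm_num) (by norm_num) h

noncomputable def rampStart (j : ℕ) : ℝ := (1 / 2) ^ (3 * 4 ^ j)

noncomputable def rampHeight (j : ℕ) : ℝ := (1 / 2) ^ 4 ^ (j + 1)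

noncomputable def dimFn : ℝ → ℝ := rampSum rampHeight rampStart

def approxExponent (q : ℕ) : ℕ := 2 * 4 ^ Nat.log 4 (Nat.log 2 q)

noncomputable def approxFn (q : ℕ) : ℝ := (1 / 2) ^ approxExponent q

lemma rampStart_pos (j : ℕ) : 0 < rampStart j := by unfold rampStart; positivity

lemma rampHeight_nonneg (j : ℕ) : 0 ≤ rampHeight j := by unfold rampHeight; positivity

lemma rampHeight_succ_le (j : ℕ) : rampHeight (j + 1) ≤ rampHeight j / 2 := by
  have h : 4 ^ (j + 1) + 1 ≤ 4 ^ (j + 1 + 1) := by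
    rw [pow_succ 4 (j + 1)]; have := Nat.one_le_pow (j + 1) 4 (by norm_num); omega
  calc rampHeight (j + 1) ≤ (1 / 2) ^ (4 ^ (j + 1) + 1) := one_half_pow_le_one_half_pow h
    _ = rampHeight j / 2 := by rw [rampHeight, pow_succ]; ring

lemma summable_rampHeight : Summable rampHeight :=
  summable_of_halving rampHeight_succ_le rampHeight_nonneg

lemma approxFn_two_pow (m : ℕ) : approxFn (2 ^ m) = (1 / 2) ^ (2 * 4 ^ Nat.log 4 m) := by
  rw [approxFn, approxExponent, Nat.log_pow one_lt_two]

lemma approxFn_pos (q : ℕ) : 0 < approxFn q := by unfold approxFn; positivity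

lemma monotone_approxExponent : Monotone approxExponent := fun _ _ h =>
  Nat.mul_le_mul_left 2 <|
    Nat.pow_le_pow_right (by norm_num) (Nat.log_mono_right (Nat.log_mono_right h))

lemma tendsto_approxExponent_atTop : Tendsto approxExponent atTop atTop :=
  monotone_approxExponent.tendsto_atTop_atTop fun b => ⟨2 ^ 4 ^ b, by
    rw [approxExponent, Nat.log_pow one_lt_two, Nat.log_pow (by norm_num)]
    have := Nat.lt_pow_self (by norm_num : 1 < 4) (n := b); omega⟩

lemma antitone_approxFn : Antitone approxFn := fun _ _ h =>
  one_half_pow_le_one_half_pow (monotone_approxExponent h)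

lemma tendsto_approxFn : Tendsto approxFn atTop (nhds 0) :=
  (tendsto_pow_atTop_nhds_zero_of_lt_one (by norm_num) (by norm_num)).comp
    tendsto_approxExponent_atTop

lemma two_pow_mul_dimFn_le (m : ℕ) :
    (2 : ℝ) ^ (3 * m) * dimFn (approxFn (2 ^ m) / 2 ^ m) ≤ 2 * (1 / 2) ^ m := by
  set L := Nat.clog 4 m
  have harg : approxFn (2 ^ m) / 2 ^ m = (1 / 2) ^ (2 * 4 ^ Nat.log 4 m + m) := by
    rw [approxFn_two_pow]; simp only [one_div_pow]; field_simp; ring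
  have hbelow : ∀ j < L, (1 / 2 : ℝ) ^ (2 * 4 ^ Nat.log 4 m + m) ≤ rampStart j := fun j hj => by
    have hjm : 4 ^ j < m := Nat.pow_lt_of_lt_clog hj
    have hjL : 4 ^ j ≤ 4 ^ Nat.log 4 m :=
      Nat.pow_le_pow_right (by norm_num) (Nat.le_log_of_pow_le (by norm_num) hjm.le)
    exact one_half_pow_le_one_half_pow (by omega)
  have hg : dimFn (approxFn (2 ^ m) / 2 ^ m) ≤ 2 * rampHeight L := by
    rw [harg]
    exact (rampSum_le_tsum_nat_add rampHeight_nonneg summable_rampHeight L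
      (fun j _ => rampStart_pos j) hbelow).trans
        (tsum_nat_add_le_of_halving rampHeight_succ_le rampHeight_nonneg L)
  have hL : rampHeight L ≤ (1 / 2) ^ (3 * m + m) := one_half_pow_le_one_half_pow <| by
    have : m ≤ 4 ^ L := Nat.le_pow_clog (by norm_num) m
    rw [pow_succ]; omega
  calc (2 : ℝ) ^ (3 * m) * dimFn (approxFn (2 ^ m) / 2 ^ m)
      ≤ 2 ^ (3 * m) * (2 * (1 / 2) ^ (3 * m + m)) := by gcongr; linarith
    _ = 2 * (1 / 2) ^ m := by simp only [one_div_pow]; field_simp; ring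

lemma quarter_le_two_pow_mul_dimFn_sqrt {n N : ℕ} (hn : n + 1 = 2 * 4 ^ N) :
    1 / 4 ≤ (2 : ℝ) ^ (2 * n) * dimFn (√(approxFn (2 ^ (2 * n))) / 2 ^ n) := by
  have h4 : 4 ^ (N + 1) = 2 * n + 2 := by rw [pow_succ]; omega
  have hlog : Nat.log 4 (2 * n) = N := by
    have := Nat.one_le_pow N 4 (by norm_num)
    apply Nat.log_eq_of_pow_le_of_lt_pow <;> omega
  have hsqrt : √(approxFn (2 ^ (2 * n))) = (1 / 2) ^ 4 ^ N := by
    rw [approxFn_two_pow, hlog, mul_comm, pow_mul]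
    exact Real.sqrt_sq (by positivity)
  have harg : 2 * rampStart N = √(approxFn (2 ^ (2 * n))) / 2 ^ n := by
    rw [hsqrt, rampStart, show 3 * 4 ^ N = 4 ^ N + n + 1 by omega]
    simp only [one_div_pow]; field_simp; ring
  have hheight : (2 : ℝ) ^ (2 * n) * rampHeight N = 1 / 4 := by
    rw [rampHeight, h4]; simp only [one_div_pow]; field_simp; ring
  calc (1 / 4 : ℝ) = 2 ^ (2 * n) * rampHeight N := hheight.symm
    _ ≤ _ := by
      gcongr
      exact le_rampSum rampHeight_nonneg summable_rampHeight (rampStart_pos N) harg.le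

lemma summable_two_pow_three_mul_dimFn :
    Summable fun k : ℕ => (2 : ℝ) ^ (3 * (k + 1)) * dimFn (approxFn (2 ^ (k + 1)) / 2 ^ (k + 1)) :=
  (summable_geometric_two.mul_left 2).of_nonneg_of_le
    (fun k => mul_nonneg (by positivity) (rampSum_nonneg rampHeight_nonneg _))
    fun k => (two_pow_mul_dimFn_le (k + 1)).trans <|
      mul_le_mul_of_nonneg_left (one_half_pow_le_one_half_pow k.le_succ) zero_le_two

lemma frequently_quarter_le_two_pow_mul_dimFn_sqrt :
    ∃ᶠ k : ℕ in atTop, (1 / 4 : ℝ) ≤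
      (2 : ℝ) ^ (k + 1) * dimFn (√(approxFn (2 ^ (k + 1))) / (2 : ℝ) ^ (((k : ℝ) + 1) / 2)) := by
  refine frequently_atTop.mpr fun a => ?_
  have ha : a < 4 ^ a := Nat.lt_pow_self (by norm_num)
  obtain ⟨n, hn⟩ : ∃ n, n + 2 = 2 * 4 ^ a := ⟨2 * 4 ^ a - 2, by omega⟩
  refine ⟨2 * n + 1, by omega, ?_⟩
  have hexp : ((2 * n + 1 : ℕ) + 1 : ℝ) / 2 = (n + 1 : ℕ) := by push_cast; ring
  rw [hexp, Real.rpow_natCast, show 2 * n + 1 + 1 = 2 * (n + 1) by ring]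
  exact quarter_le_two_pow_mul_dimFn_sqrt hn

lemma not_summable_two_pow_mul_dimFn_sqrt :
    ¬ Summable fun k : ℕ =>
      (2 : ℝ) ^ (k + 1) * dimFn (√(approxFn (2 ^ (k + 1))) / (2 : ℝ) ^ (((k : ℝ) + 1) / 2)) := by
  intro hs
  obtain ⟨k, hle, hlt⟩ := (frequently_quarter_le_two_pow_mul_dimFn_sqrt.and_eventually
    (hs.tendsto_atTop_zero.eventually (gt_mem_nhds (by norm_num : (0 : ℝ) < 1 / 4)))).exists
  exact (not_lt_of_ge hle) hlt

theorem stmt_2 :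
    ∃ (Ψ : ℕ → ℝ) (g : ℝ → ℝ),
      (∀ q : ℕ, 0 < Ψ q) ∧ Antitone Ψ ∧
      Filter.Tendsto Ψ Filter.atTop (nhds 0) ∧
      (∀ x : ℝ, 0 ≤ x → 0 ≤ g x) ∧
      MonotoneOn g (Set.Ici 0) ∧ ContinuousOn g (Set.Ici 0) ∧ g 0 = 0 ∧
      Summable (fun k : ℕ => (2:ℝ) ^ (3 * (k + 1)) * g (Ψ (2 ^ (k + 1)) / 2 ^ (k + 1))) ∧
      ¬ Summable (fun k : ℕ =>
        (2:ℝ) ^ (k + 1) * g (Real.sqrt (Ψ (2 ^ (k + 1))) / (2:ℝ) ^ (((k:ℝ) + 1) / 2))) :=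
  ⟨approxFn, dimFn, approxFn_pos, antitone_approxFn, tendsto_approxFn,
    fun x _ => rampSum_nonneg rampHeight_nonneg x,
    (monotone_rampSum rampHeight_nonneg summable_rampHeight
      fun j => (rampStart_pos j).le).monotoneOn _,
    (continuous_rampSum rampHeight_nonneg summable_rampHeight).continuousOn,
    rampSum_zero, summable_two_pow_three_mul_dimFn, not_summable_two_pow_mul_dimFn_sqrt⟩
end

section
/- Gelfond's lemma: for any positive integer n there exist constants c₁(n), c₂(n) > 0 such that for any finite collection of nonzero integer polynomials P₁, …, P_k whose product has degree at most n, one has c₁(n) · H_{P₁} ⋯ H_{P_k} ≤ H_{P₁⋯P_k} ≤ c₂(n) · H_{P₁} ⋯ H_{P_k}. -/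
/-!
Gelfond's lemma follows from the multiplicativity of the Mahler measure `M` together with the
two comparisons `H(p) ≤ 2 ^ deg p · M(p)` (Vieta, via the roots of `p`) and
`M(p) ≤ (deg p + 1) · H(p) ≤ 2 ^ deg p · H(p)` (since `M(p)` is at most the sum of the absolute
values of the coefficients). Multiplying these over the factors, the losses add up to at most
`4 ^ n` in either direction.
-/

/-- Height of an integer polynomial: max absolute value of its coefficients. -/
def polyHeight (P : Polynomial ℤ) : ℕ := P.support.sup fun i => (P.coeff i).natAbs

open Polynomial Finset

namespace Polynomial

theorem mapMahlerMeasure_prod {A ι : Type*} [CommSemiring A] (v : A →+* ℂ) (s : Finset ι)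
    (P : ι → A[X]) :
    (∏ i ∈ s, P i).mapMahlerMeasure v = ∏ i ∈ s, (P i).mapMahlerMeasure v :=
  map_prod (⟨⟨(mapMahlerMeasure · v), mapMahlerMeasure_one v⟩, mapMahlerMeasure_mul v⟩ : A[X] →* ℝ)
    P s

section Comparison

variable {A : Type*} [NormedRing A] {v : A →+* ℂ}

theorem supNorm_le_two_pow_natDegree_mul_mapMahlerMeasure (hv : Isometry v) (p : A[X]) :
    p.supNorm ≤ 2 ^ p.natDegree * p.mapMahlerMeasure v := by
  obtain ⟨i, hi⟩ := p.exists_eq_supNorm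
  rw [hi]
  refine (norm_coeff_le_choose_mul_mapMahlerMeasure v hv i p).trans ?_
  gcongr
  · exact mapMahlerMeasure_nonneg p v
  · exact_mod_cast Nat.choose_le_two_pow _ _

theorem mapMahlerMeasure_le_two_pow_natDegree_mul_supNorm (hv : Isometry v) (p : A[X]) :
    p.mapMahlerMeasure v ≤ 2 ^ p.natDegree * p.supNorm :=
  calc p.mapMahlerMeasure v ≤ p.sum fun _ a ↦ ‖a‖ := mapMahlerMeasure_le_sum_norm_coeff p v hv
    _ ≤ #p.support • p.supNorm := by
      rw [sum_def]
      exact sum_le_card_nsmul _ _ _ fun i _ ↦ p.le_supNorm i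
    _ ≤ 2 ^ p.natDegree * p.supNorm := by
      rw [nsmul_eq_mul]
      gcongr
      · exact p.supNorm_nonneg
      · exact_mod_cast p.card_supp_le_succ_natDegree.trans Nat.lt_two_pow_self

end Comparison

section Products

variable {A ι : Type*} [NormedCommRing A] {v : A →+* ℂ}

theorem supNorm_prod_le (hv : Isometry v) (s : Finset ι) (P : ι → A[X]) :
    (∏ i ∈ s, P i).supNorm ≤ 4 ^ (∑ i ∈ s, (P i).natDegree) * ∏ i ∈ s, (P i).supNorm :=
  calc (∏ i ∈ s, P i).supNorm
      ≤ 2 ^ (∏ i ∈ s, P i).natDegree * (∏ i ∈ s, P i).mapMahlerMeasure v :=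
        supNorm_le_two_pow_natDegree_mul_mapMahlerMeasure hv _
    _ ≤ 2 ^ (∑ i ∈ s, (P i).natDegree) * ∏ i ∈ s, (P i).mapMahlerMeasure v := by
        rw [mapMahlerMeasure_prod]
        gcongr
        · exact prod_nonneg fun i _ ↦ mapMahlerMeasure_nonneg _ v
        · norm_num
        · exact natDegree_prod_le s P
    _ ≤ 2 ^ (∑ i ∈ s, (P i).natDegree) * ∏ i ∈ s, (2 ^ (P i).natDegree * (P i).supNorm) := by
        gcongr with i
        · exact fun i _ ↦ mapMahlerMeasure_nonneg _ v
        · exact mapMahlerMeasure_le_two_pow_natDegree_mul_supNorm hv _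
    _ = 4 ^ (∑ i ∈ s, (P i).natDegree) * ∏ i ∈ s, (P i).supNorm := by
        rw [prod_mul_distrib, prod_pow_eq_pow_sum, ← mul_assoc, ← mul_pow]
        norm_num

theorem prod_supNorm_le (hv : Isometry v) (s : Finset ι) (P : ι → A[X]) :
    ∏ i ∈ s, (P i).supNorm ≤ 4 ^ (∑ i ∈ s, (P i).natDegree) * (∏ i ∈ s, P i).supNorm :=
  calc ∏ i ∈ s, (P i).supNorm
      ≤ ∏ i ∈ s, (2 ^ (P i).natDegree * (P i).mapMahlerMeasure v) := by
        gcongr with i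
        · exact fun i _ ↦ supNorm_nonneg _
        · exact supNorm_le_two_pow_natDegree_mul_mapMahlerMeasure hv _
    _ = 2 ^ (∑ i ∈ s, (P i).natDegree) * (∏ i ∈ s, P i).mapMahlerMeasure v := by
        rw [prod_mul_distrib, prod_pow_eq_pow_sum, mapMahlerMeasure_prod]
    _ ≤ 2 ^ (∑ i ∈ s, (P i).natDegree) *
          (2 ^ (∏ i ∈ s, P i).natDegree * (∏ i ∈ s, P i).supNorm) := by
        gcongr
        exact mapMahlerMeasure_le_two_pow_natDegree_mul_supNorm hv _
    _ ≤ 2 ^ (∑ i ∈ s, (P i).natDegree) *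
          (2 ^ (∑ i ∈ s, (P i).natDegree) * (∏ i ∈ s, P i).supNorm) := by
        gcongr
        · exact supNorm_nonneg _
        · norm_num
        · exact natDegree_prod_le s P
    _ = 4 ^ (∑ i ∈ s, (P i).natDegree) * (∏ i ∈ s, P i).supNorm := by
        rw [← mul_assoc, ← mul_pow]
        norm_num

end Products

end Polynomial

theorem polyHeight_eq_supNorm (P : ℤ[X]) : (polyHeight P : ℝ) = P.supNorm := by
  have norm_coeff (i : ℕ) : ‖P.coeff i‖ = ((P.coeff i).natAbs : ℝ) := by
    rw [Int.norm_eq_abs, Nat.cast_natAbs, Int.cast_abs]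
  apply le_antisymm
  · rcases P.support.eq_empty_or_nonempty with hP | hP
    · simp [polyHeight, hP, P.supNorm_nonneg]
    · obtain ⟨i, -, hi⟩ := exists_mem_eq_sup _ hP fun i ↦ (P.coeff i).natAbs
      rw [polyHeight, hi, ← norm_coeff]
      exact P.le_supNorm i
  · obtain ⟨i, hi⟩ := P.exists_eq_supNorm
    rw [hi, norm_coeff, Nat.cast_le]
    by_cases hi : i ∈ P.support
    · exact le_sup (f := fun i ↦ (P.coeff i).natAbs) hi
    · simp [notMem_support_iff.mp hi]

theorem stmt_11_general (n : ℕ) :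
    ∃ c₁ c₂ : ℝ, 0 < c₁ ∧ 0 < c₂ ∧
      ∀ (k : ℕ) (P : Fin k → Polynomial ℤ), (∀ i, P i ≠ 0) →
        (∏ i, P i).natDegree ≤ n →
        c₁ * ∏ i, (polyHeight (P i) : ℝ) ≤ (polyHeight (∏ i, P i) : ℝ) ∧
        (polyHeight (∏ i, P i) : ℝ) ≤ c₂ * ∏ i, (polyHeight (P i) : ℝ) := by
  refine ⟨(4 ^ n)⁻¹, 4 ^ n, by positivity, by positivity, fun k P hP hdeg ↦ ?_⟩
  have hv : Isometry (Int.castRingHom ℂ) := Complex.isometry_intCast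
  have hloss : (4 : ℝ) ^ (∑ i, (P i).natDegree) ≤ 4 ^ n := by
    rw [natDegree_prod _ _ fun i _ ↦ hP i] at hdeg
    exact pow_le_pow_right₀ (by norm_num) hdeg
  simp only [polyHeight_eq_supNorm]
  constructor
  · rw [inv_mul_le_iff₀ (by positivity)]
    exact (prod_supNorm_le hv univ P).trans (by gcongr; exact supNorm_nonneg _)
  · exact (supNorm_prod_le hv univ P).trans
      (by gcongr; exact prod_nonneg fun i _ ↦ supNorm_nonneg _)

theorem stmt_11 (n : ℕ) (hn : 0 < n) :
    ∃ c₁ c₂ : ℝ, 0 < c₁ ∧ 0 < c₂ ∧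
      ∀ (k : ℕ) (P : Fin k → Polynomial ℤ), (∀ i, P i ≠ 0) →
        (∏ i, P i).natDegree ≤ n →
        c₁ * ∏ i, (polyHeight (P i) : ℝ) ≤ (polyHeight (∏ i, P i) : ℝ) ∧
        (polyHeight (∏ i, P i) : ℝ) ≤ c₂ * ∏ i, (polyHeight (P i) : ℝ) :=
  stmt_11_general n
end
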